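/- Let 0 < σ_ε < σ_T < ∞, α ∈ ℝ, and let μ_data be a compactly supported probability measure on ℝ^d. Define s_*(x) as the quotient of ∫ Φ_{σ_ε}^{σ_T}((d+α)/2, |x−x̃|²/2)(x̃−x) dμ_data(x̃) by ∫ Φ_{σ_ε}^{σ_T}((d+2α−2)/2, |x−x̃|²/2) dμ_data(x̃). Then |s_*(x)|/|x| converges uniformly to σ_T^{α−2} as |x| → ∞: lim_{R→∞} sup_{|x|≥R} | |s_*(x)|/|x| − σ_T^{α−2} | = 0. -/

import Mathlib

open MeasureTheory Real Filter

/-- `Φ a b s z = ∫_{1/b²}^{1/a²} u^(s-1) e^{-z u} du`. -/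
noncomputable def Phi (a b s z : ℝ) : ℝ :=
  ∫ u in (1 / b ^ 2)..(1 / a ^ 2), u ^ (s - 1) * Real.exp (-z * u)

/-- The optimal model `s_*`. -/
noncomputable def sStar (d : ℕ) (μ : Measure (EuclideanSpace ℝ (Fin d)))
    (σε σT α : ℝ) (x : EuclideanSpace ℝ (Fin d)) : EuclideanSpace ℝ (Fin d) :=
  (∫ xt, Phi σε σT (((d : ℝ) + 2 * α - 2) / 2) (‖x - xt‖ ^ 2 / 2) ∂μ)⁻¹ •
    ∫ xt, Phi σε σT (((d : ℝ) + α) / 2) (‖x - xt‖ ^ 2 / 2) • (xt - x) ∂μ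

/-!
As `z → ∞` the integral `Φ(s, z)` concentrates at its lower endpoint `c = 1/σ_T²`: the kernel
`z e^{-z(u - c)}` is a peak function there, so `z e^{zc} Φ(s, z) → c^{s-1}`, and the ratio of the
two `Φ`'s in `s_*` tends to `σ_T^{α-2}`. Now `s_*(x)/|x|` is the average of
`(Φ₁/Φ₂)(|x - x̃|²/2) (x̃ - x)/|x|` against the positive weights `Φ₂(|x - x̃|²/2) dμ(x̃)`; since
`μ` lives on a compact set, far away `|x - x̃| → ∞` and `(x̃ - x)/|x| ≈ -x/|x|` uniformly in `x̃`,
so this average is close to `-σ_T^{α-2} x/|x|`, a vector of length `σ_T^{α-2}`.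
-/

open Set Bornology Topology

theorem Phi_pos (s z : ℝ) {a b : ℝ} (ha : 0 < a) (hab : a < b) : 0 < Phi a b s z := by
  have hc : 0 < 1 / b ^ 2 := by have := ha.trans hab; positivity
  have hcL : 1 / b ^ 2 < 1 / a ^ 2 := one_div_lt_one_div_of_lt (by positivity) (by gcongr)
  refine intervalIntegral.intervalIntegral_pos_of_pos_on ?_ (fun u hu => ?_) hcL
  · refine ContinuousOn.intervalIntegrable ?_
    rw [uIcc_of_le hcL.le]
    exact (continuousOn_id.rpow_const fun u hu => Or.inl (hc.trans_le hu.1).ne').mul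
      (by fun_prop)
  · exact mul_pos (rpow_pos_of_pos (hc.trans hu.1) _) (exp_pos _)

theorem continuous_Phi (s : ℝ) {a b : ℝ} (ha : 0 < a) (hab : a < b) : Continuous (Phi a b s) := by
  have hcL : 1 / b ^ 2 < 1 / a ^ 2 := one_div_lt_one_div_of_lt (by positivity) (by gcongr)
  -- on the range of integration the integrand agrees with a jointly continuous function
  have hPhi : Phi a b s = fun z => ∫ u in (1 / b ^ 2)..(1 / a ^ 2),
      max u (1 / b ^ 2) ^ (s - 1) * exp (-z * u) := by
    funext z
    refine intervalIntegral.integral_congr fun u hu => ?_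
    rw [uIcc_of_le hcL.le] at hu
    simp only [max_eq_left hu.1]
  rw [hPhi]
  refine intervalIntegral.continuous_parametric_intervalIntegral_of_continuous' ?_ _ _
  have hb : 0 < b := ha.trans hab
  exact (Continuous.rpow_const (by fun_prop) fun p =>
    Or.inl (lt_max_of_lt_right (by positivity)).ne').mul (by fun_prop)

theorem integral_Ioc_mul_exp_neg_mul_sub (z : ℝ) {c L : ℝ} (hcL : c ≤ L) :
    ∫ u in Ioc c L, z * exp (-(z * (u - c))) = 1 - exp (-(z * (L - c))) := by
  have hderiv : ∀ u ∈ uIcc c L, HasDerivAt (fun u => -exp (-(z * (u - c))))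
      (z * exp (-(z * (u - c)))) u := fun u _ =>
    (((hasDerivAt_id' u).sub_const c).const_mul z).fun_neg.exp.fun_neg.congr_deriv (by ring)
  have hint : Continuous fun u => z * exp (-(z * (u - c))) := by fun_prop
  rw [← intervalIntegral.integral_of_le hcL,
    intervalIntegral.integral_eq_sub_of_hasDerivAt hderiv (hint.intervalIntegrable _ _)]
  simp only [sub_self, mul_zero, neg_zero, exp_zero]
  ring

theorem tendstoUniformlyOn_mul_exp_neg_mul_sub (c : ℝ) {δ : ℝ} (hδ : 0 < δ) :
    TendstoUniformlyOn (fun z u => z * exp (-(z * (u - c)))) 0 atTop (Ici (c + δ)) := by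
  have hlim : Tendsto (fun z => z * exp (-(δ * z))) atTop (𝓝 0) := by
    simpa [rpow_one] using tendsto_rpow_mul_exp_neg_mul_atTop_nhds_zero 1 δ hδ
  rw [Metric.tendstoUniformlyOn_iff]
  intro ε hε
  filter_upwards [eventually_ge_atTop 0, hlim.eventually (gt_mem_nhds hε)] with z hz hzε u hu
  rw [Pi.zero_apply, dist_zero_left, norm_of_nonneg (by positivity)]
  calc z * exp (-(z * (u - c))) ≤ z * exp (-(δ * z)) := by
        gcongr _ * exp ?_; nlinarith [mem_Ici.1 hu]
    _ < ε := hzε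

theorem tendsto_mul_exp_mul_Phi (s : ℝ) {a b : ℝ} (ha : 0 < a) (hab : a < b) :
    Tendsto (fun z => z * exp (z / b ^ 2) * Phi a b s z) atTop (𝓝 ((1 / b ^ 2) ^ (s - 1))) := by
  set c := 1 / b ^ 2 with hc_def
  set L := 1 / a ^ 2
  have hc : 0 < c := by have := ha.trans hab; positivity
  have hcL : c < L := one_div_lt_one_div_of_lt (by positivity) (by gcongr)
  have hrepr : ∀ z, z * exp (z / b ^ 2) * Phi a b s z =
      ∫ u in Ioc c L, (z * exp (-(z * (u - c)))) • u ^ (s - 1) := by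
    intro z
    rw [Phi, intervalIntegral.integral_of_le hcL.le, ← integral_const_mul]
    refine setIntegral_congr_fun measurableSet_Ioc fun u _ => ?_
    have : exp (-(z * (u - c))) = exp (z / b ^ 2) * exp (-z * u) := by
      rw [← exp_add, hc_def]; ring_nf
    rw [this, smul_eq_mul]; ring
  rw [tendsto_congr hrepr]
  refine tendsto_setIntegral_peak_smul_of_integrableOn_of_tendsto (x₀ := c) measurableSet_Ioc
    measurableSet_Ioc subset_rfl self_mem_nhdsWithin measure_Ioc_lt_top.ne ?_ ?_ ?_ ?_ ?_ ?_
  · filter_upwards [eventually_ge_atTop 0] with z hz u _ using mul_nonneg hz (exp_pos _).le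
  · intro U hU hcU
    obtain ⟨δ, hδ, hball⟩ := Metric.isOpen_iff.1 hU c hcU
    refine (tendstoUniformlyOn_mul_exp_neg_mul_sub c hδ).mono fun u hu => mem_Ici.2 ?_
    by_contra! h
    refine hu.2 (hball ?_)
    rw [Metric.mem_ball, dist_eq, abs_of_pos (sub_pos.2 hu.1.1)]
    linarith
  · simp_rw [integral_Ioc_mul_exp_neg_mul_sub _ hcL.le]
    simpa using tendsto_const_nhds.sub
      (tendsto_exp_neg_atTop_nhds_zero.comp (tendsto_id.atTop_mul_const (sub_pos.2 hcL)))
  · exact Eventually.of_forall fun z => (by fun_prop : Continuous _).aestronglyMeasurable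
  · exact ((continuousOn_id.rpow_const fun u hu => Or.inl (hc.trans_le hu.1).ne').integrableOn_Icc
      ).mono_set Ioc_subset_Icc_self
  · exact (continuousAt_rpow_const c (s - 1) (Or.inl hc.ne')).tendsto.mono_left nhdsWithin_le_nhds

theorem tendsto_Phi_div_Phi (s t : ℝ) {a b : ℝ} (ha : 0 < a) (hab : a < b) :
    Tendsto (fun z => Phi a b s z / Phi a b t z) atTop (𝓝 (b ^ (2 * (t - s)))) := by
  have hb : 0 < b := ha.trans hab
  have hlim := (tendsto_mul_exp_mul_Phi s ha hab).div (tendsto_mul_exp_mul_Phi t ha hab)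
    (rpow_pos_of_pos (by positivity) _).ne'
  have hval : (1 / b ^ 2) ^ (s - 1) / (1 / b ^ 2) ^ (t - 1) = b ^ (2 * (t - s)) := by
    rw [← rpow_sub (by positivity), one_div, ← rpow_natCast, ← rpow_neg hb.le, ← rpow_mul hb.le]
    congr 1; push_cast; ring
  rw [hval] at hlim
  refine hlim.congr' ?_
  filter_upwards [eventually_gt_atTop 0] with z hz
  exact mul_div_mul_left _ _ (by positivity)

section WeightedAverage

variable {α F : Type*} [MeasurableSpace α] [NormedAddCommGroup F] [NormedSpace ℝ F]
  [CompleteSpace F] {μ : Measure α}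

theorem norm_inv_integral_smul_integral_smul_sub_le {w : α → ℝ} {f : α → F} {v : F} {η : ℝ}
    (hw : ∀ᵐ a ∂μ, 0 ≤ w a) (hwi : Integrable w μ) (hwf : Integrable (fun a => w a • f a) μ)
    (hW : 0 < ∫ a, w a ∂μ) (hf : ∀ᵐ a ∂μ, ‖f a - v‖ ≤ η) :
    ‖(∫ a, w a ∂μ)⁻¹ • ∫ a, w a • f a ∂μ - v‖ ≤ η := by
  have hcentre : (∫ a, w a ∂μ)⁻¹ • ∫ a, w a • f a ∂μ - v =
      (∫ a, w a ∂μ)⁻¹ • ∫ a, w a • (f a - v) ∂μ := by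
    simp_rw [smul_sub]
    rw [integral_sub hwf (hwi.smul_const v), integral_smul_const, smul_sub, inv_smul_smul₀ hW.ne']
  have hbound : ‖∫ a, w a • (f a - v) ∂μ‖ ≤ ∫ a, η * w a ∂μ := by
    refine norm_integral_le_of_norm_le (hwi.const_mul η) ?_
    filter_upwards [hw, hf] with a hwa hfa
    rw [norm_smul, norm_of_nonneg hwa, mul_comm]
    exact mul_le_mul_of_nonneg_right hfa hwa
  rw [integral_const_mul] at hbound
  rw [hcentre, norm_smul, norm_inv, norm_of_nonneg hW.le]
  calc (∫ a, w a ∂μ)⁻¹ * ‖∫ a, w a • (f a - v) ∂μ‖ ≤ (∫ a, w a ∂μ)⁻¹ * (η * ∫ a, w a ∂μ) := by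
        gcongr
    _ = η := by field_simp

theorem tendsto_inv_integral_smul_integral_smul_sub {ι : Type*} {l : Filter ι} {K : Set α}
    [NeZero μ] (hK : ∀ᵐ a ∂μ, a ∈ K) {w : ι → α → ℝ} {f : ι → α → F} {v : ι → F}
    (hw : ∀ i a, 0 < w i a) (hwi : ∀ i, Integrable (w i) μ)
    (hwf : ∀ i, Integrable (fun a => w i a • f i a) μ)
    (hf : Tendsto (fun p : ι × α => f p.1 p.2 - v p.1) (l ×ˢ 𝓟 K) (𝓝 0)) :
    Tendsto (fun i => (∫ a, w i a ∂μ)⁻¹ • ∫ a, w i a • f i a ∂μ - v i) l (𝓝 0) := by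
  have hW : ∀ i, 0 < ∫ a, w i a ∂μ := fun i => by
    rw [integral_pos_iff_support_of_nonneg (fun a => (hw i a).le) (hwi i),
      Function.support_eq_univ fun a => (hw i a).ne']
    exact Measure.measure_univ_pos.2 (NeZero.ne μ)
  rw [Metric.tendsto_nhds] at hf ⊢
  intro ε hε
  filter_upwards [eventually_prod_principal_iff.1 (hf (ε / 2) (half_pos hε))] with i hi
  rw [dist_zero_right]
  refine (norm_inv_integral_smul_integral_smul_sub_le (ae_of_all _ fun a => (hw i a).le) (hwi i)
    (hwf i) (hW i) ?_).trans_lt (half_lt_self hε)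
  filter_upwards [hK] with a ha
  simpa using (hi a ha).le

end WeightedAverage

theorem tendsto_norm_of_tendsto_sub_of_norm_eq {ι F : Type*} [SeminormedAddCommGroup F]
    {l : Filter ι} {A v : ι → F} {κ : ℝ} (h : Tendsto (fun i => A i - v i) l (𝓝 0))
    (hv : ∀ᶠ i in l, ‖v i‖ = κ) : Tendsto (fun i => ‖A i‖) l (𝓝 κ) := by
  rw [tendsto_iff_norm_sub_tendsto_zero]
  refine squeeze_zero' (Eventually.of_forall fun _ => norm_nonneg _) ?_
    (tendsto_zero_iff_norm_tendsto_zero.1 h)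
  filter_upwards [hv] with i hi
  rw [← hi, Real.norm_eq_abs]
  exact abs_norm_sub_norm_le _ _

section FarFromBoundedSet

variable {E : Type*} [NormedAddCommGroup E] {K : Set E}

theorem tendsto_norm_sub_cobounded_prod_principal (hK : IsBounded K) :
    Tendsto (fun p : E × E => ‖p.1 - p.2‖) (cobounded E ×ˢ 𝓟 K) atTop := by
  obtain ⟨M, hM⟩ := hK.exists_norm_le
  refine tendsto_atTop_mono' _ ?_
    (tendsto_atTop_add_const_right _ (-M) (tendsto_norm_cobounded_atTop.comp tendsto_fst))
  refine eventually_prod_principal_iff.2 (Eventually.of_forall fun x y hy => ?_)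
  dsimp only [Function.comp_apply]
  linarith [norm_sub_norm_le x y, hM y hy]

variable [NormedSpace ℝ E]

theorem tendsto_inv_norm_smul_cobounded_prod_principal (hK : IsBounded K) :
    Tendsto (fun p : E × E => ‖p.1‖⁻¹ • p.2) (cobounded E ×ˢ 𝓟 K) (𝓝 0) := by
  obtain ⟨M, hM⟩ := hK.exists_norm_le
  refine (tendsto_inv_atTop_zero.comp (tendsto_norm_cobounded_atTop.comp tendsto_fst))
    |>.zero_smul_isBoundedUnder_le (isBoundedUnder_of_eventually_le (a := M) ?_)
  exact eventually_prod_principal_iff.2 (Eventually.of_forall fun _ y hy => hM y hy)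

theorem tendsto_smul_inv_norm_smul_sub_add (hK : IsBounded K) {r : E × E → ℝ} {κ : ℝ}
    (hr : Tendsto r (cobounded E ×ˢ 𝓟 K) (𝓝 κ)) :
    Tendsto (fun p : E × E => r p • ‖p.1‖⁻¹ • (p.2 - p.1) + κ • ‖p.1‖⁻¹ • p.1)
      (cobounded E ×ˢ 𝓟 K) (𝓝 0) := by
  have hunit : IsBoundedUnder (· ≤ ·) (cobounded E ×ˢ 𝓟 K)
      (norm ∘ fun p : E × E => ‖p.1‖⁻¹ • p.1) :=
    isBoundedUnder_of_eventually_le (a := 1) (Eventually.of_forall fun p => by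
      rw [Function.comp_apply, norm_smul, norm_inv, norm_norm]
      exact inv_mul_le_one_of_le₀ le_rfl (norm_nonneg _))
  have h := (hr.smul (tendsto_inv_norm_smul_cobounded_prod_principal hK)).sub
    ((tendsto_sub_nhds_zero_iff.2 hr).zero_smul_isBoundedUnder_le hunit)
  rw [smul_zero, sub_zero] at h
  refine h.congr fun p => ?_
  module

end FarFromBoundedSet

theorem Continuous.integrable_of_ae_mem_isCompact {X F : Type*} [TopologicalSpace X]
    [MeasurableSpace X] [OpensMeasurableSpace X] [T2Space X] [NormedAddCommGroup F]
    {μ : Measure X} [IsFiniteMeasure μ] {K : Set X} (hK : IsCompact K) (hμK : ∀ᵐ x ∂μ, x ∈ K)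
    {g : X → F} (hg : Continuous g) : Integrable g μ := by
  rw [← Measure.restrict_eq_self_of_ae_mem hμK]
  exact hg.continuousOn.integrableOn_compact hK

theorem tendsto_norm_sStar_div_norm (d : ℕ) (σε σT α : ℝ) (hσε : 0 < σε) (hσ : σε < σT)
    (μ : Measure (EuclideanSpace ℝ (Fin d))) [IsFiniteMeasure μ] [NeZero μ]
    {K : Set (EuclideanSpace ℝ (Fin d))} (hK : IsCompact K) (hμK : ∀ᵐ x ∂μ, x ∈ K) :
    Tendsto (fun x => ‖sStar d μ σε σT α x‖ / ‖x‖) (cobounded _) (𝓝 (σT ^ (α - 2))) := by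
  set s₁ := ((d : ℝ) + α) / 2
  set s₂ := ((d : ℝ) + 2 * α - 2) / 2
  have hρ : Tendsto (fun t => Phi σε σT s₁ t / Phi σε σT s₂ t) atTop (𝓝 (σT ^ (α - 2))) := by
    convert tendsto_Phi_div_Phi s₁ s₂ hσε hσ using 3; ring
  have hz : Tendsto (fun p : EuclideanSpace ℝ (Fin d) × _ => ‖p.1 - p.2‖ ^ 2 / 2)
      (cobounded _ ×ˢ 𝓟 K) atTop :=
    ((tendsto_pow_atTop two_ne_zero).comp
      (tendsto_norm_sub_cobounded_prod_principal hK.isBounded)).atTop_div_const two_pos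
  have hcont : ∀ s (x : EuclideanSpace ℝ (Fin d)),
      Continuous fun xt => Phi σε σT s (‖x - xt‖ ^ 2 / 2) :=
    fun s x => (continuous_Phi s hσε hσ).comp (by fun_prop)
  have hdir := tendsto_inv_integral_smul_integral_smul_sub hμK
    (w := fun x xt => Phi σε σT s₂ (‖x - xt‖ ^ 2 / 2))
    (f := fun x xt => (Phi σε σT s₁ (‖x - xt‖ ^ 2 / 2) / Phi σε σT s₂ (‖x - xt‖ ^ 2 / 2)) •
      ‖x‖⁻¹ • (xt - x))
    (v := fun x => -(σT ^ (α - 2) • ‖x‖⁻¹ • x))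
    (fun _ _ => Phi_pos _ _ hσε hσ) (fun x => (hcont s₂ x).integrable_of_ae_mem_isCompact hK hμK)
    (fun x => Continuous.integrable_of_ae_mem_isCompact hK hμK (by
      have := hcont s₂ x
      have := hcont s₁ x
      fun_prop (disch := exact fun _ => (Phi_pos _ _ hσε hσ).ne')))
    (by simpa only [sub_neg_eq_add, Function.comp_apply] using
      tendsto_smul_inv_norm_smul_sub_add hK.isBounded (hρ.comp hz))
  have hA : ∀ x, (∫ xt, Phi σε σT s₂ (‖x - xt‖ ^ 2 / 2) ∂μ)⁻¹ •
      ∫ xt, Phi σε σT s₂ (‖x - xt‖ ^ 2 / 2) •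
        (Phi σε σT s₁ (‖x - xt‖ ^ 2 / 2) / Phi σε σT s₂ (‖x - xt‖ ^ 2 / 2)) • ‖x‖⁻¹ • (xt - x) ∂μ =
      ‖x‖⁻¹ • sStar d μ σε σT α x := by
    intro x
    have hpt : ∀ xt, Phi σε σT s₂ (‖x - xt‖ ^ 2 / 2) •
        (Phi σε σT s₁ (‖x - xt‖ ^ 2 / 2) / Phi σε σT s₂ (‖x - xt‖ ^ 2 / 2)) • ‖x‖⁻¹ • (xt - x) =
        ‖x‖⁻¹ • Phi σε σT s₁ (‖x - xt‖ ^ 2 / 2) • (xt - x) := fun xt => by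
      rw [smul_smul, mul_div_cancel₀ _ (Phi_pos _ _ hσε hσ).ne', smul_comm]
    simp_rw [hpt]
    rw [integral_smul, smul_comm]
    rfl
  refine (tendsto_norm_of_tendsto_sub_of_norm_eq hdir ?_).congr fun x => by
    rw [hA, norm_smul, norm_inv, norm_norm, inv_mul_eq_div]
  filter_upwards [eventually_ne_cobounded 0] with x hx
  rw [norm_neg, norm_smul, norm_smul, norm_inv, norm_norm, inv_mul_cancel₀ (norm_ne_zero_iff.2 hx),
    mul_one, norm_of_nonneg (rpow_nonneg (hσε.trans hσ).le _)]

/-- For a compactly supported probability measure `μ_data`, `|s_*(x)|/|x|` converges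
uniformly to `σ_T^{α-2}` as `|x| → ∞`. -/
theorem sStar_linear_growth (d : ℕ) (σε σT α : ℝ) (hσε : 0 < σε) (hσ : σε < σT)
    (μ : Measure (EuclideanSpace ℝ (Fin d))) [IsProbabilityMeasure μ]
    (hμ : ∃ K : Set (EuclideanSpace ℝ (Fin d)), IsCompact K ∧ μ Kᶜ = 0) :
    ∀ ε > 0, ∃ R : ℝ, ∀ x : EuclideanSpace ℝ (Fin d), R ≤ ‖x‖ →
      |‖sStar d μ σε σT α x‖ / ‖x‖ - σT ^ (α - 2)| < ε := by
  obtain ⟨K, hK, hμK⟩ := hμ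
  have h := tendsto_norm_sStar_div_norm d σε σT α hσε hσ μ hK (mem_ae_iff.2 hμK)
  rw [← comap_norm_atTop, (atTop_basis.comap _).tendsto_iff Metric.nhds_basis_ball] at h
  intro ε hε
  obtain ⟨R, -, hR⟩ := h ε hε
  exact ⟨R, fun x hx => hR x hx⟩
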